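/- arXiv:2002.08586 — 2 statements merged into one kernel-verified Lean document; each statement's English description precedes it below -/
import Mathlib

section
/- Let A be a symmetric n×n real matrix with n distinct eigenvalues λ_1, …, λ_n and corresponding orthonormal eigenvectors v_1, …, v_n, each satisfying v_iᵀ·1 ≠ 0. If P is an n×n real matrix with P·1 = 1 and PA = AP, then P = I_n. -/
open Matrix

/-! Let `V` be the matrix with rows `v i`. Orthonormality makes `V` orthogonal and the eigen-equations
give `V A Vᵀ = diagonal lam`, so `Q := V P Vᵀ` commutes with a diagonal matrix with distinct
entries and is therefore diagonal. `Q` fixes `V 1`, whose entries `v i ⬝ᵥ 1` are all nonzero, so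
`Q = 1` and hence `P = Vᵀ Q V = 1`. -/

theorem Commute.conj_of_mul_eq_one {M : Type*} [Monoid M] {a b u w : M} (hwu : w * u = 1)
    (h : Commute a b) : Commute (u * a * w) (u * b * w) := by
  calc u * a * w * (u * b * w) = u * a * (w * u) * b * w := by simp only [mul_assoc]
    _ = u * (b * a) * w := by rw [hwu, mul_one, mul_assoc u a b, h.eq]
    _ = u * b * (w * u) * a * w := by rw [hwu, mul_one, mul_assoc u b a]
    _ = u * b * w * (u * a * w) := by simp only [mul_assoc]

theorem eq_one_of_conj_eq_one {M : Type*} [Monoid M] {a u w : M} (hwu : w * u = 1)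
    (h : u * a * w = 1) : a = 1 := by
  calc a = w * u * a * (w * u) := by rw [hwu, one_mul, mul_one]
    _ = w * (u * a * w) * u := by simp only [mul_assoc]
    _ = 1 := by rw [h, mul_one, hwu]

namespace Matrix

variable {ι K : Type*} [Fintype ι] [DecidableEq ι] [CommRing K]

theorem of_mul_transpose_of_eq_one {v : ι → ι → K}
    (h : ∀ i j, v i ⬝ᵥ v j = if i = j then 1 else 0) : of v * (of v)ᵀ = 1 := by
  ext i j
  rw [mul_apply', one_apply]
  exact h i j

theorem mul_transpose_of_eq_transpose_of_mul_diagonal {M : Matrix ι ι K} {lam : ι → K}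
    {v : ι → ι → K} (h : ∀ i, M *ᵥ v i = lam i • v i) :
    M * (of v)ᵀ = (of v)ᵀ * diagonal lam := by
  ext j i
  rw [mul_diagonal, mul_apply']
  exact (congrFun (h i) j).trans (mul_comm _ _)

theorem isDiag_of_commute_diagonal [NoZeroDivisors K] {d : ι → K} (hd : Function.Injective d)
    {Q : Matrix ι ι K} (h : Commute Q (diagonal d)) : Q.IsDiag := by
  intro i j hij
  have hij' : Q i j * d j = d i * Q i j := by
    simpa only [mul_diagonal, diagonal_mul] using congrFun (congrFun h.eq i) j
  have : Q i j * (d j - d i) = 0 := by linear_combination hij'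
  exact (mul_eq_zero.mp this).resolve_right (sub_ne_zero.mpr (hd.ne hij).symm)

theorem IsDiag.eq_one_of_mulVec_eq [NoZeroDivisors K] {Q : Matrix ι ι K} (hQ : Q.IsDiag)
    {w : ι → K} (hw : ∀ i, w i ≠ 0) (h : Q *ᵥ w = w) : Q = 1 := by
  rw [← hQ.diagonal_diag] at h ⊢
  rw [← diagonal_one]
  congr 1
  funext i
  have hi : Q.diag i * w i = 1 * w i := by simpa only [mulVec_diagonal, one_mul] using congrFun h i
  exact mul_right_cancel₀ (hw i) hi

end Matrix

theorem stmt_11_general (n : ℕ) (A : Matrix (Fin n) (Fin n) ℝ)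
    (lam : Fin n → ℝ) (v : Fin n → (Fin n → ℝ))
    (heig : ∀ i, A.mulVec (v i) = lam i • v i)
    (hdistinct : Function.Injective lam)
    (horth : ∀ i j, dotProduct (v i) (v j) = if i = j then 1 else 0)
    (hfriendly : ∀ i, dotProduct (v i) (fun _ => (1 : ℝ)) ≠ 0)
    (P : Matrix (Fin n) (Fin n) ℝ)
    (hP1 : P.mulVec (fun _ => (1 : ℝ)) = fun _ => 1)
    (hcomm : P * A = A * P) :
    P = 1 := by
  set V := of v
  have hVVt : V * Vᵀ = 1 := of_mul_transpose_of_eq_one horth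
  have hVtV : Vᵀ * V = 1 := mul_eq_one_comm.mp hVVt
  have hD : V * A * Vᵀ = diagonal lam := by
    rw [mul_assoc, mul_transpose_of_eq_transpose_of_mul_diagonal heig, ← mul_assoc, hVVt, one_mul]
  have hQdiag : (V * P * Vᵀ).IsDiag :=
    isDiag_of_commute_diagonal hdistinct (hD ▸ Commute.conj_of_mul_eq_one hVtV hcomm)
  have hQfix : (V * P * Vᵀ) *ᵥ (V *ᵥ fun _ => 1) = V *ᵥ fun _ => 1 := by
    rw [mulVec_mulVec, mul_assoc, hVtV, mul_one, ← mulVec_mulVec, hP1]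
  exact eq_one_of_conj_eq_one hVtV (hQdiag.eq_one_of_mulVec_eq hfriendly hQfix)

theorem stmt_11 (n : ℕ) (A : Matrix (Fin n) (Fin n) ℝ) (hA : Aᵀ = A)
    (lam : Fin n → ℝ) (v : Fin n → (Fin n → ℝ))
    (heig : ∀ i, A.mulVec (v i) = lam i • v i)
    (hdistinct : Function.Injective lam)
    (horth : ∀ i j, dotProduct (v i) (v j) = if i = j then 1 else 0)
    (hfriendly : ∀ i, dotProduct (v i) (fun _ => (1 : ℝ)) ≠ 0)
    (P : Matrix (Fin n) (Fin n) ℝ)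
    (hP1 : P.mulVec (fun _ => (1 : ℝ)) = fun _ => 1)
    (hcomm : P * A = A * P) :
    P = 1 :=
  stmt_11_general n A lam v heig hdistinct horth hfriendly P hP1 hcomm
end

section
/- Let f(x) = Mx + b be an affine map on R^n. If for every initial condition x_0 the solution of ẋ = f(x), x(0) = x_0 converges to some equilibrium as t → ∞, then the convergence is exponentially fast: there exist constants C, α > 0 (possibly depending on x_0) such that ‖x(t) - x̄‖ ≤ C e^{-αt} for the limiting equilibrium x̄. -/
/-!
Differences of solutions of `ẋ = A x + b` are orbits `t ↦ Φ t v` of the semigroup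
`Φ t = exp (t • A)`. Since `x + Φ(·) v` is again a solution, the convergence of all solutions
forces every orbit to converge, and in finite dimension this makes `Φ t` converge in operator norm
to some `P`. As `P` is idempotent and absorbs `Φ`, `t ↦ ‖Φ t - P‖` is submultiplicative; it is
below `1/2` at some time `T`, so it decays like `2^(-t/T)`. Finally `x t - x̄ = (Φ t - P)(x 0 - x̄)`.
-/

open Filter Topology Set NormedSpace

theorem le_mul_half_pow_of_submultiplicative {g : ℝ → ℝ} (hg0 : ∀ t, 0 ≤ g t)
    (hmul : ∀ s t, 0 ≤ s → 0 ≤ t → g (s + t) ≤ g s * g t) {T K : ℝ} (hT : 0 ≤ T)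
    (hgT : g T ≤ 1 / 2) (hK : ∀ s ∈ Icc 0 T, g s ≤ K) (k : ℕ) {s : ℝ} (hs : s ∈ Icc 0 T) :
    g (k * T + s) ≤ K * (1 / 2) ^ k := by
  induction k with
  | zero => simpa using hK s hs
  | succ k ih =>
    have hnonneg : 0 ≤ k * T + s := by have := hs.1; positivity
    calc g ((k + 1 : ℕ) * T + s) = g (T + (k * T + s)) := by push_cast; ring_nf
      _ ≤ g T * g (k * T + s) := hmul _ _ hT hnonneg
      _ ≤ 1 / 2 * (K * (1 / 2) ^ k) :=
        mul_le_mul hgT ih (hg0 _) (by norm_num)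
      _ = K * (1 / 2) ^ (k + 1) := by ring

theorem half_pow_floor_div_le_exp (T t : ℝ) :
    (1 / 2 : ℝ) ^ ⌊t / T⌋₊ ≤ 2 * Real.exp (-(Real.log 2 / T) * t) := by
  have hfloor : t / T - 1 < ⌊t / T⌋₊ := by linarith [Nat.lt_floor_add_one (t / T)]
  calc (1 / 2 : ℝ) ^ ⌊t / T⌋₊ = Real.exp (-(⌊t / T⌋₊ * Real.log 2)) := by
        rw [Real.exp_neg, Real.exp_nat_mul, Real.exp_log two_pos, one_div, inv_pow]
    _ ≤ Real.exp (Real.log 2 + -(Real.log 2 / T) * t) := by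
        gcongr
        have hlog := Real.log_pos one_lt_two
        have : Real.log 2 / T * t = t / T * Real.log 2 := by ring
        nlinarith
    _ = 2 * Real.exp (-(Real.log 2 / T) * t) := by rw [Real.exp_add, Real.exp_log two_pos]

theorem exists_le_exp_of_submultiplicative {g : ℝ → ℝ} (hg0 : ∀ t, 0 ≤ g t)
    (hmul : ∀ s t, 0 ≤ s → 0 ≤ t → g (s + t) ≤ g s * g t) (hcont : ContinuousOn g (Ici 0))
    (hlim : Tendsto g atTop (𝓝 0)) :
    ∃ C α, 0 < C ∧ 0 < α ∧ ∀ t, 0 ≤ t → g t ≤ C * Real.exp (-α * t) := by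
  obtain ⟨T, hT, hgT⟩ : ∃ T > 0, g T ≤ 1 / 2 :=
    ((hlim.eventually (eventually_le_nhds (by norm_num))).and (eventually_gt_atTop 0)).exists
      |>.imp fun _ h ↦ ⟨h.2, h.1⟩
  obtain ⟨K₀, hK₀⟩ := isCompact_Icc.exists_bound_of_continuousOn
    (hcont.mono (Icc_subset_Ici_self : Icc 0 T ⊆ Ici 0))
  set K := max K₀ 1
  have hK : ∀ s ∈ Icc 0 T, g s ≤ K := fun s hs ↦
    (le_abs_self _).trans ((hK₀ s hs).trans (le_max_left _ _))
  refine ⟨2 * K, Real.log 2 / T, by positivity, div_pos (Real.log_pos one_lt_two) hT,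
    fun t ht ↦ ?_⟩
  set k := ⌊t / T⌋₊
  have hkT : k * T ≤ t := (le_div_iff₀ hT).mp (Nat.floor_le (div_nonneg ht hT.le))
  have hrem : t - k * T ∈ Icc 0 T := by
    refine ⟨by linarith, ?_⟩
    have := (div_lt_iff₀ hT).mp (Nat.lt_floor_add_one (t / T))
    linarith
  calc g t = g (k * T + (t - k * T)) := by ring_nf
    _ ≤ K * (1 / 2) ^ k :=
      le_mul_half_pow_of_submultiplicative hg0 hmul hT.le hgT hK k hrem
    _ ≤ K * (2 * Real.exp (-(Real.log 2 / T) * t)) := by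
      gcongr
      exact half_pow_floor_div_le_exp T t
    _ = 2 * K * Real.exp (-(Real.log 2 / T) * t) := by ring

section Semigroup

variable {R : Type*} [NormedRing R] {Φ : ℝ → R} {P : R}

theorem sub_mul_sub_of_tendsto_atTop (hadd : ∀ s t, 0 ≤ s → 0 ≤ t → Φ (s + t) = Φ s * Φ t)
    (hP : Tendsto Φ atTop (𝓝 P)) {s t : ℝ} (hs : 0 ≤ s) (ht : 0 ≤ t) :
    Φ (s + t) - P = (Φ s - P) * (Φ t - P) := by
  have hleft : ∀ s, 0 ≤ s → Φ s * P = P := fun s hs ↦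
    tendsto_nhds_unique_of_eventuallyEq (tendsto_const_nhds.mul hP)
      (hP.comp (tendsto_atTop_add_const_left _ s tendsto_id))
      ((eventually_ge_atTop 0).mono fun u hu ↦ (hadd s u hs hu).symm)
  have hright : P * Φ t = P :=
    tendsto_nhds_unique_of_eventuallyEq (hP.mul tendsto_const_nhds)
      (hP.comp (tendsto_atTop_add_const_right _ t tendsto_id))
      ((eventually_ge_atTop 0).mono fun u hu ↦ (hadd u t hu ht).symm)
  have hidem : P * P = P :=
    tendsto_nhds_unique_of_eventuallyEq (hP.mul tendsto_const_nhds) tendsto_const_nhds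
      ((eventually_ge_atTop 0).mono fun u hu ↦ hleft u hu)
  rw [hadd s t hs ht, sub_mul, mul_sub, mul_sub, hleft s hs, hright, hidem]
  abel

theorem exists_norm_sub_le_exp_of_tendsto_atTop
    (hadd : ∀ s t, 0 ≤ s → 0 ≤ t → Φ (s + t) = Φ s * Φ t) (hcont : ContinuousOn Φ (Ici 0))
    (hP : Tendsto Φ atTop (𝓝 P)) :
    ∃ C α, 0 < C ∧ 0 < α ∧ ∀ t, 0 ≤ t → ‖Φ t - P‖ ≤ C * Real.exp (-α * t) := by
  refine exists_le_exp_of_submultiplicative (fun t ↦ norm_nonneg _) (fun s t hs ht ↦ ?_)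
    (hcont.sub continuousOn_const).norm (tendsto_iff_norm_sub_tendsto_zero.mp hP)
  rw [sub_mul_sub_of_tendsto_atTop hadd hP hs ht]
  exact norm_mul_le _ _

end Semigroup

theorem ContinuousLinearMap.exists_tendsto_of_forall_exists_tendsto_apply {𝕜 E F α : Type*}
    [NontriviallyNormedField 𝕜] [CompleteSpace 𝕜] [NormedAddCommGroup E] [NormedSpace 𝕜 E]
    [FiniteDimensional 𝕜 E] [NormedAddCommGroup F] [NormedSpace 𝕜 F] {l : Filter α}
    {f : α → E →L[𝕜] F} (h : ∀ y, ∃ z, Tendsto (fun a ↦ f a y) l (𝓝 z)) :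
    ∃ g, Tendsto f l (𝓝 g) := by
  choose z hz using h
  let c : E ≃L[𝕜] Fin (Module.finrank 𝕜 E) → 𝕜 :=
    ContinuousLinearEquiv.ofFinrankEq (Module.finrank_fin_fun 𝕜).symm
  let e : (E →L[𝕜] F) ≃L[𝕜] Fin (Module.finrank 𝕜 E) → F :=
    (c.arrowCongr (1 : F ≃L[𝕜] F)).trans (ContinuousLinearEquiv.piRing _)
  have he : Tendsto (fun a ↦ e (f a)) l (𝓝 fun i ↦ z (c.symm (Pi.single i 1))) :=
    tendsto_pi_nhds.mpr fun i ↦ hz _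
  refine ⟨e.symm fun i ↦ z (c.symm (Pi.single i 1)), ?_⟩
  simpa only [Function.comp_def, ContinuousLinearEquiv.symm_apply_apply] using
    (e.symm.continuous.tendsto _).comp he

theorem exp_add_smul {𝔸 : Type*} [NormedRing 𝔸] [NormedAlgebra ℝ 𝔸] [CompleteSpace 𝔸] (a : 𝔸)
    (s t : ℝ) : exp ((s + t) • a) = exp (s • a) * exp (t • a) := by
  let _ : NormedAlgebra ℚ 𝔸 := .restrictScalars ℚ ℝ 𝔸
  rw [add_smul]
  exact exp_add_of_commute (((Commute.refl a).smul_left s).smul_right t)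

section LinearODE

variable {E : Type*} [NormedAddCommGroup E] [NormedSpace ℝ E] [CompleteSpace E]

theorem hasDerivAt_exp_smul_apply (A : E →L[ℝ] E) (v : E) (t : ℝ) :
    HasDerivAt (fun s : ℝ ↦ exp (s • A) v) (A (exp (t • A) v)) t := by
  simpa using (hasDerivAt_exp_smul_const' A t).clm_apply (hasDerivAt_const t v)

theorem eq_exp_smul_apply_of_hasDerivAt (A : E →L[ℝ] E) {y : ℝ → E}
    (hy : ∀ t, HasDerivAt y (A (y t)) t) (t : ℝ) : y t = exp (t • A) (y 0) :=
  congrFun (ODE_solution_unique_univ (v := fun _ ↦ A) (s := fun _ ↦ univ) (t₀ := 0)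
    (fun _ ↦ A.lipschitz.lipschitzOnWith) (fun t ↦ ⟨hy t, trivial⟩)
    (fun t ↦ ⟨hasDerivAt_exp_smul_apply A (y 0) t, trivial⟩) (by simp)) t

variable {A : E →L[ℝ] E} {b : E} {x z : ℝ → E}

theorem sub_eq_exp_smul_apply_sub (hx : ∀ t, HasDerivAt x (A (x t) + b) t)
    (hz : ∀ t, HasDerivAt z (A (z t) + b) t) (t : ℝ) :
    z t - x t = exp (t • A) (z 0 - x 0) :=
  eq_exp_smul_apply_of_hasDerivAt A (y := z - x)
    (fun t ↦ ((hz t).sub (hx t)).congr_deriv (by simp only [Pi.sub_apply, map_sub]; abel)) t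

theorem sub_eq_exp_smul_apply_sub_of_tendsto (hx : ∀ t, HasDerivAt x (A (x t) + b) t) {xbar : E}
    (hxbar : Tendsto x atTop (𝓝 xbar)) (t : ℝ) :
    x t - xbar = exp (t • A) (x 0 - xbar) := by
  have hshift : ∀ s, x (t + s) - x t = exp (t • A) (x s - x 0) := fun s ↦ by
    simpa [add_comm] using sub_eq_exp_smul_apply_sub hx (fun u ↦ (hx (u + s)).comp_add_const u s) t
  have hlim : xbar - x t = exp (t • A) (xbar - x 0) := by
    have hleft := (hxbar.comp (tendsto_atTop_add_const_left _ t tendsto_id)).sub_const (x t)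
    simp only [Function.comp_def, id, hshift] at hleft
    exact tendsto_nhds_unique hleft (((exp (t • A)).continuous.tendsto _).comp (hxbar.sub_const _))
  rw [← neg_sub, hlim, ← map_neg, neg_sub]

theorem exists_tendsto_exp_smul_apply
    (hconv : ∀ z : ℝ → E, (∀ t, HasDerivAt z (A (z t) + b) t) → ∃ w, Tendsto z atTop (𝓝 w))
    (hx : ∀ t, HasDerivAt x (A (x t) + b) t) (v : E) :
    ∃ w, Tendsto (fun t : ℝ ↦ exp (t • A) v) atTop (𝓝 w) := by
  obtain ⟨xbar, hxbar⟩ := hconv x hx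
  obtain ⟨w, hw⟩ := hconv (fun t ↦ x t + exp (t • A) v) fun t ↦
    ((hx t).add (hasDerivAt_exp_smul_apply A v t)).congr_deriv (by rw [map_add]; abel)
  exact ⟨w - xbar, by simpa using hw.sub hxbar⟩

end LinearODE

theorem exists_norm_sub_le_exp_of_forall_tendsto {E : Type*} [NormedAddCommGroup E]
    [NormedSpace ℝ E] [FiniteDimensional ℝ E] {A : E →L[ℝ] E} {b : E} {x : ℝ → E}
    (hconv : ∀ z : ℝ → E, (∀ t, HasDerivAt z (A (z t) + b) t) → ∃ w, Tendsto z atTop (𝓝 w))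
    (hx : ∀ t, HasDerivAt x (A (x t) + b) t) :
    ∃ (xbar : E) (C α : ℝ), 0 < C ∧ 0 < α ∧ Tendsto x atTop (𝓝 xbar) ∧
      ∀ t, 0 ≤ t → ‖x t - xbar‖ ≤ C * Real.exp (-α * t) := by
  obtain ⟨xbar, hxbar⟩ := hconv x hx
  obtain ⟨P, hP⟩ := ContinuousLinearMap.exists_tendsto_of_forall_exists_tendsto_apply
    (exists_tendsto_exp_smul_apply hconv hx)
  obtain ⟨C, α, hC, hα, hdecay⟩ := exists_norm_sub_le_exp_of_tendsto_atTop
    (fun s t _ _ ↦ exp_add_smul A s t)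
    (differentiable_exp_smul_const ℝ A).continuous.continuousOn hP
  set y₀ := x 0 - xbar
  have hrep := sub_eq_exp_smul_apply_sub_of_tendsto hx hxbar
  have hPy₀ : P y₀ = 0 := by
    have h := (hxbar.sub_const xbar).congr hrep
    rw [sub_self] at h
    exact tendsto_nhds_unique (((ContinuousLinearMap.apply ℝ E y₀).continuous.tendsto P).comp hP) h
  refine ⟨xbar, C * (‖y₀‖ + 1), α, by positivity, hα, hxbar, fun t ht ↦ ?_⟩
  calc ‖x t - xbar‖ = ‖(exp (t • A) - P) y₀‖ := by
        rw [hrep, sub_apply, hPy₀, sub_zero]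
    _ ≤ ‖exp (t • A) - P‖ * ‖y₀‖ := ContinuousLinearMap.le_opNorm _ _
    _ ≤ C * Real.exp (-α * t) * (‖y₀‖ + 1) := by
        gcongr
        · exact hdecay t ht
        · linarith
    _ = C * (‖y₀‖ + 1) * Real.exp (-α * t) := by ring

theorem stmt_18 (n : ℕ) (M : Matrix (Fin n) (Fin n) ℝ) (b : EuclideanSpace ℝ (Fin n))
    (hconv : ∀ x : ℝ → EuclideanSpace ℝ (Fin n),
      (∀ t : ℝ, HasDerivAt x ((show EuclideanSpace ℝ (Fin n) from WithLp.toLp 2 (M.mulVec (x t))) + b) t) →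
      ∃ xbar : EuclideanSpace ℝ (Fin n), Tendsto x atTop (𝓝 xbar)) :
    ∀ x : ℝ → EuclideanSpace ℝ (Fin n),
      (∀ t : ℝ, HasDerivAt x ((show EuclideanSpace ℝ (Fin n) from WithLp.toLp 2 (M.mulVec (x t))) + b) t) →
      ∃ (xbar : EuclideanSpace ℝ (Fin n)) (C α : ℝ), 0 < C ∧ 0 < α ∧
        Tendsto x atTop (𝓝 xbar) ∧
        ∀ t : ℝ, 0 ≤ t → ‖x t - xbar‖ ≤ C * Real.exp (-α * t) :=
  fun _ ↦ exists_norm_sub_le_exp_of_forall_tendsto (A := Matrix.toEuclideanCLM (𝕜 := ℝ) M) hconv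
end
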